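/- Let L be a DGLA, α a Maurer–Cartan element of L[[ℏ]] with the ℏ-adic filtration, ξ ∈ ℏ·(L⁰[t])[[ℏ]], and α(t) the solution of dα/dt = dξ + [α(t), ξ], α(0) = α. Then for every η ∈ ℏ·L⁰[[ℏ]] and integer k ≥ 0, the element λ(t) = exp((t^{k+1}/(k+1))[·,η]) α(t) + ((exp((t^{k+1}/(k+1))[·,η]) − 1)/[·,η]) dη satisfies dλ(t)/dt = d ξ̃ + [λ(t), ξ̃] with ξ̃(t) = t^k η + exp((t^{k+1}/(k+1))[·,η]) ξ(t). -/

import Mathlib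

/-- `x k n` is the coefficient of `ℏ^k t^n`. -/
def IsPolyInT {V : Type*} [Zero V] (v : ℕ → ℕ → V) : Prop :=
  ∀ k, ∃ N, ∀ n, N ≤ n → v k n = 0

/-- Multiplication by `c(t) = t^{q+1}/(q+1)` on `(β[t])[[ℏ]]`. -/
def cShift {β : Type*} [AddCommMonoid β] [Module ℚ β] (q : ℕ)
    (ρ : ℕ → ℕ → β) : ℕ → ℕ → β :=
  fun k n => if q + 1 ≤ n then ((q + 1 : ℚ))⁻¹ • ρ k (n - (q + 1)) else 0

section

variable {g0 g1 g2 : Type*}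
  [AddCommGroup g0] [Module ℚ g0] [AddCommGroup g1] [Module ℚ g1]
  [AddCommGroup g2] [Module ℚ g2]

/-- The operator `[·, η]` on `(L¹[t])[[ℏ]]`, for `η ∈ ℏ·L⁰[[ℏ]]`. -/
def adEta1 (br10 : g1 →ₗ[ℚ] g0 →ₗ[ℚ] g1) (η : ℕ → g0)
    (ρ : ℕ → ℕ → g1) : ℕ → ℕ → g1 :=
  fun k n => ∑ p ∈ Finset.HasAntidiagonal.antidiagonal k, br10 (ρ p.1 n) (η p.2)

/-- The operator `[·, η]` on `(L⁰[t])[[ℏ]]`. -/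
def adEta0 (br00 : g0 →ₗ[ℚ] g0 →ₗ[ℚ] g0) (η : ℕ → g0)
    (ρ : ℕ → ℕ → g0) : ℕ → ℕ → g0 :=
  fun k n => ∑ p ∈ Finset.HasAntidiagonal.antidiagonal k, br00 (ρ p.1 n) (η p.2)

/-- `λ(t) = exp((t^{q+1}/(q+1))[·,η]) α(t)
           + ((exp((t^{q+1}/(q+1))[·,η]) − 1)/[·,η]) dη`. -/
def lamEl (br10 : g1 →ₗ[ℚ] g0 →ₗ[ℚ] g1) (d0 : g0 →ₗ[ℚ] g1) (q : ℕ)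
    (η : ℕ → g0) (α : ℕ → ℕ → g1) : ℕ → ℕ → g1 :=
  fun k n =>
    (∑ m ∈ Finset.range (k + 1),
      (m.factorial : ℚ)⁻¹ •
        (((fun ρ => cShift q (adEta1 br10 η ρ))^[m]) α) k n)
    + ∑ m ∈ Finset.range (k + 1),
        ((m + 1).factorial : ℚ)⁻¹ •
          (cShift q
            (((fun ρ => cShift q (adEta1 br10 η ρ))^[m])
              (fun i j => if j = 0 then d0 (η i) else 0))) k n

/-- `ξ̃(t) = t^q η + exp((t^{q+1}/(q+1))[·,η]) ξ(t)`. -/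
def xiTilde (br00 : g0 →ₗ[ℚ] g0 →ₗ[ℚ] g0) (q : ℕ)
    (η : ℕ → g0) (ξ : ℕ → ℕ → g0) : ℕ → ℕ → g0 :=
  fun k n =>
    (if n = q then η k else 0)
    + ∑ m ∈ Finset.range (k + 1),
        (m.factorial : ℚ)⁻¹ •
          (((fun ρ => cShift q (adEta0 br00 η ρ))^[m]) ξ) k n

/-!
Write `T = c(t)[·, η]` with `c(t) = t^{q+1}/(q+1)`. Since `η ∈ ℏ L⁰[[ℏ]]`, `T` raises the
`ℏ`-order, so modulo `ℏ^{k+1}` the exponential `e^T` is the finite sum `∑_{m ≤ k} T^m/m!` and the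
whole computation can be done with truncated exponentials, modulo `ℏ^{k+1}`.

`T` is a derivation of the bracket (Jacobi), and `[T, d] = [c dη, ·]` (`d` is a derivation). The
binomial expansion of `T^m ∘ A` in terms of iterated commutators then gives
`e^T A = (e^{ad_T} A) e^T` for `A = [α, ·]` and for `A = d`, i.e.
`e^T [α, ξ] = [e^T α, e^T ξ]` and `e^T d ξ = d e^T ξ + [((e^T − 1)/ad) c dη, e^T ξ]`.
On the other hand `d/dt` commutes with `ad` and `d/dt ∘ c = c ∘ d/dt + t^q`, so
`d/dt e^T = e^T d/dt + t^q [e^T ·, η]` and `d/dt ((e^T − 1)/ad) c dη = t^q e^T dη`.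
Inserting `dα/dt = dξ + [α, ξ]` and collecting terms gives the equation for `λ`.
-/

open Finset

section CauchyProduct

variable {R U V W X Y Z : Type*} [CommSemiring R]
  [AddCommMonoid U] [Module R U] [AddCommMonoid V] [Module R V] [AddCommMonoid W] [Module R W]
  [AddCommMonoid X] [Module R X] [AddCommMonoid Y] [Module R Y] [AddCommMonoid Z] [Module R Z]

def cauchyProd (B : U →ₗ[R] V →ₗ[R] W) : (ℕ → U) →ₗ[R] (ℕ → V) →ₗ[R] (ℕ → W) :=
  LinearMap.mk₂ R (fun f g n => ∑ p ∈ antidiagonal n, B (f p.1) (g p.2))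
    (fun _ _ _ => by ext; simp [sum_add_distrib])
    (fun _ _ _ => by ext; simp [smul_sum])
    (fun _ _ _ => by ext; simp [sum_add_distrib])
    (fun _ _ _ => by ext; simp [smul_sum])

theorem cauchyProd_apply (B : U →ₗ[R] V →ₗ[R] W) (f : ℕ → U) (g : ℕ → V) (n : ℕ) :
    cauchyProd B f g n = ∑ p ∈ antidiagonal n, B (f p.1) (g p.2) := rfl

theorem cauchyProd_swap (B : U →ₗ[R] V →ₗ[R] W) (f : ℕ → U) (g : ℕ → V) :
    cauchyProd B f g = cauchyProd B.flip g f := by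
  ext n
  rw [cauchyProd_apply, cauchyProd_apply, ← Nat.sum_antidiagonal_swap]
  rfl

theorem cauchyProd_map {B : U →ₗ[R] V →ₗ[R] W} {B' : X →ₗ[R] Y →ₗ[R] Z} (φ : W →ₗ[R] Z)
    {f : ℕ → U} {g : ℕ → V} (ψ : U → X) (χ : V → Y)
    (h : ∀ i j, φ (B (f i) (g j)) = B' (ψ (f i)) (χ (g j))) :
    (fun n => φ (cauchyProd B f g n)) = cauchyProd B' (ψ ∘ f) (χ ∘ g) := by
  ext n
  simp [cauchyProd_apply, h]

theorem sum_antidiagonal_fst_assoc {M : Type*} [AddCommMonoid M] (n : ℕ) (F : ℕ → ℕ → ℕ → M) :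
    ∑ p ∈ antidiagonal n, ∑ s ∈ antidiagonal p.1, F s.1 s.2 p.2
      = ∑ p ∈ antidiagonal n, ∑ s ∈ antidiagonal p.2, F p.1 s.1 s.2 := by
  simp only [sum_sigma']
  apply sum_nbij' (fun x => ⟨(x.2.1, x.2.2 + x.1.2), (x.2.2, x.1.2)⟩)
    (fun x => ⟨(x.1.1 + x.2.1, x.2.2), (x.1.1, x.2.1)⟩) <;>
    aesop (add simp [add_assoc])

theorem sum_antidiagonal_fst_swap {M : Type*} [AddCommMonoid M] (n : ℕ) (F : ℕ → ℕ → ℕ → M) :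
    ∑ p ∈ antidiagonal n, ∑ s ∈ antidiagonal p.1, F s.1 s.2 p.2
      = ∑ p ∈ antidiagonal n, ∑ s ∈ antidiagonal p.1, F s.1 p.2 s.2 := by
  simp only [sum_sigma']
  apply sum_nbij' (fun x => ⟨(x.2.1 + x.1.2, x.2.2), (x.2.1, x.1.2)⟩)
    (fun x => ⟨(x.2.1 + x.1.2, x.2.2), (x.2.1, x.1.2)⟩) <;>
    aesop (add simp [add_assoc, add_comm, add_left_comm])

theorem cauchyProd_jacobi {W' : Type*} [AddCommMonoid W'] [Module R W']
    {B₁ : U →ₗ[R] V →ₗ[R] W} {B₂ : W →ₗ[R] X →ₗ[R] Y} {B₃ : U →ₗ[R] X →ₗ[R] W}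
    {B₄ : W →ₗ[R] V →ₗ[R] Y} {B₅ : U →ₗ[R] W' →ₗ[R] Y} {B₆ : V →ₗ[R] X →ₗ[R] W'}
    (h : ∀ a b c, B₂ (B₁ a b) c = B₄ (B₃ a c) b + B₅ a (B₆ b c))
    (f : ℕ → U) (g : ℕ → V) (k : ℕ → X) :
    cauchyProd B₂ (cauchyProd B₁ f g) k
      = cauchyProd B₄ (cauchyProd B₃ f k) g + cauchyProd B₅ f (cauchyProd B₆ g k) := by
  ext n
  simp only [Pi.add_apply, cauchyProd_apply, map_sum, LinearMap.sum_apply, h, sum_add_distrib]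
  congr 1
  · exact (sum_antidiagonal_fst_swap n fun i j l => B₄ (B₃ (f i) (k j)) (g l)).symm
  · exact sum_antidiagonal_fst_assoc n fun i j l => B₅ (f i) (B₆ (g j) (k l))

theorem cauchyProd_cocycle {B : U →ₗ[R] V →ₗ[R] W} {B₀ : V →ₗ[R] V →ₗ[R] X} {D : V →ₗ[R] U}
    {φ : X →ₗ[R] W} (h : ∀ a b, B (D a) b = φ (B₀ a b) + B (D b) a) (f g : ℕ → V) :
    cauchyProd B (D.compLeft ℕ f) g
      = φ.compLeft ℕ (cauchyProd B₀ f g) + cauchyProd B (D.compLeft ℕ g) f := by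
  ext n
  rw [cauchyProd_swap B (D.compLeft ℕ g)]
  simp only [cauchyProd_apply, Pi.add_apply, LinearMap.compLeft_apply, Function.comp_apply,
    map_sum]
  rw [← sum_add_distrib]
  exact sum_congr rfl fun p _ => h _ _

theorem cauchyProd_single_right (B : U →ₗ[R] V →ₗ[R] W) (f : ℕ → U) (x : V) :
    cauchyProd B f (fun j => if j = 0 then x else 0) = fun n => B (f n) x := by
  ext n
  rw [cauchyProd_apply, sum_eq_single (n, 0)]
  · simp
  · rintro ⟨a, b⟩ hp hne
    rw [HasAntidiagonal.mem_antidiagonal] at hp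
    have : b ≠ 0 := by rintro rfl; simp_all
    simp [this]
  · simp

variable (R) in
def tShift (j : ℕ) : (ℕ → W) →ₗ[R] (ℕ → W) where
  toFun f n := if j ≤ n then f (n - j) else 0
  map_add' f g := by ext n; split_ifs <;> simp [*]
  map_smul' c f := by ext n; split_ifs <;> simp [*]

theorem tShift_apply (j : ℕ) (f : ℕ → W) (n : ℕ) :
    tShift R j f n = if j ≤ n then f (n - j) else 0 := rfl

theorem tShift_tShift (i j : ℕ) (f : ℕ → W) : tShift R i (tShift R j f) = tShift R (i + j) f := by
  ext n
  simp only [tShift_apply]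
  by_cases h : i + j ≤ n
  · rw [if_pos (by omega), if_pos (by omega), if_pos h, Nat.sub_sub]
  · rw [if_neg h]
    split_ifs <;> first | rfl | omega

theorem sum_antidiagonal_ite_le_fst {M : Type*} [AddCommMonoid M] (j n : ℕ) (F : ℕ → ℕ → M) :
    ∑ p ∈ antidiagonal n, (if j ≤ p.1 then F (p.1 - j) p.2 else 0)
      = if j ≤ n then ∑ p ∈ antidiagonal (n - j), F p.1 p.2 else 0 := by
  split_ifs with h
  · rw [← sum_filter, Nat.antidiagonal_filter_le_fst_of_le h, sum_map]
    simp
  · refine Finset.sum_eq_zero fun p hp => if_neg ?_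
    rw [HasAntidiagonal.mem_antidiagonal] at hp
    omega

theorem cauchyProd_tShift_left (B : U →ₗ[R] V →ₗ[R] W) (j : ℕ) (f : ℕ → U) (g : ℕ → V) :
    cauchyProd B (tShift R j f) g = tShift R j (cauchyProd B f g) := by
  ext n
  simp only [tShift_apply, cauchyProd_apply]
  rw [← sum_antidiagonal_ite_le_fst j n fun a b => B (f a) (g b)]
  refine sum_congr rfl fun p _ => ?_
  split_ifs <;> simp

theorem cauchyProd_tShift_right (B : U →ₗ[R] V →ₗ[R] W) (j : ℕ) (f : ℕ → U) (g : ℕ → V) :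
    cauchyProd B f (tShift R j g) = tShift R j (cauchyProd B f g) := by
  rw [cauchyProd_swap, cauchyProd_tShift_left, ← cauchyProd_swap]

variable (R) in
def tDeriv : (ℕ → W) →ₗ[R] (ℕ → W) where
  toFun f n := (n + 1) • f (n + 1)
  map_add' f g := by ext n; simp
  map_smul' c f := by ext n; exact smul_comm _ _ _

theorem tDeriv_apply (f : ℕ → W) (n : ℕ) : tDeriv R f n = (n + 1) • f (n + 1) := rfl

theorem tDeriv_tShift_succ (j : ℕ) (f : ℕ → W) :
    tDeriv R (tShift R (j + 1) f) = (j + 1) • tShift R j f + tShift R (j + 1) (tDeriv R f) := by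
  ext n
  simp only [tDeriv_apply, tShift_apply, Pi.add_apply, Pi.smul_apply]
  by_cases h : j + 1 ≤ n
  · rw [if_pos (by omega), if_pos (by omega), if_pos h,
      show n + 1 - (j + 1) = n - j by omega, show n - (j + 1) + 1 = n - j by omega, ← add_nsmul]
    congr 1
    omega
  · by_cases h' : j = n
    · subst h'
      simp
    · rw [if_neg (by omega), if_neg (by omega), if_neg h]
      simp

end CauchyProduct

section Filtration

variable (R : Type*) [CommRing R] (W : Type*) [AddCommGroup W] [Module R W]

/-- `ℏ^s W[[ℏ]]`, for a sequence of `ℏ`-coefficients. -/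
def hbarPow (s : ℕ) : Submodule R (ℕ → W) where
  carrier := {f | ∀ i < s, f i = 0}
  add_mem' hf hg i hi := by simp [hf i hi, hg i hi]
  zero_mem' _ _ := rfl
  smul_mem' c f hf i hi := by simp [hf i hi]

variable {R W} {U V : Type*} [AddCommGroup U] [Module R U] [AddCommGroup V] [Module R V]

theorem mem_hbarPow_zero (f : ℕ → W) : f ∈ hbarPow R W 0 := fun _ h => absurd h (Nat.not_lt_zero _)

theorem hbarPow_antitone : Antitone (hbarPow R W) :=
  fun _ _ hab _ hf i hi => hf i (lt_of_lt_of_le hi hab)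

theorem apply_eq_of_smodEq {k : ℕ} {f g : ℕ → W} (h : f ≡ g [SMOD hbarPow R W (k + 1)]) :
    f k = g k :=
  sub_eq_zero.1 (by simpa using SModEq.sub_mem.1 h k (Nat.lt_succ_self k))

theorem diagonal_sum_smodEq_sum {u : ℕ → ℕ → W} {s N M : ℕ}
    (hu : ∀ m, u m ∈ hbarPow R W (m + s)) (hM : N < M + s) :
    (fun p => ∑ m ∈ range (p + 1), u m p) ≡ ∑ m ∈ range M, u m [SMOD hbarPow R W (N + 1)] := by
  have htrunc : ∀ p M', p < M' + s → ∑ m ∈ range M', u m p = ∑ m ∈ range (p + 1 - s), u m p := by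
    intro p M' hp
    refine (sum_subset (range_subset_range.2 (by omega)) fun m _ hm => hu m p ?_).symm
    rw [mem_range] at hm
    omega
  refine SModEq.sub_mem.2 fun p hp => ?_
  rw [Pi.sub_apply, Finset.sum_apply, htrunc p (p + 1) (by omega), htrunc p M (by omega),
    sub_self]

theorem cauchyProd_mem_hbarPow (B : U →ₗ[R] V →ₗ[R] W) {a b : ℕ} {f : ℕ → U} {g : ℕ → V}
    (hf : f ∈ hbarPow R U a) (hg : g ∈ hbarPow R V b) :
    cauchyProd B f g ∈ hbarPow R W (a + b) := by
  intro n hn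
  rw [cauchyProd_apply]
  refine Finset.sum_eq_zero fun p hp => ?_
  rw [HasAntidiagonal.mem_antidiagonal] at hp
  rcases Nat.lt_or_ge p.1 a with h | h
  · simp [hf _ h]
  · simp [hg p.2 (by omega)]

theorem compLeft_mem_hbarPow (φ : V →ₗ[R] W) {s : ℕ} {f : ℕ → V} (hf : f ∈ hbarPow R V s) :
    φ.compLeft ℕ f ∈ hbarPow R W s := by
  intro i hi
  simp [hf i hi]

theorem compLeft_smodEq (φ : V →ₗ[R] W) {s : ℕ} {f f' : ℕ → V}
    (h : f ≡ f' [SMOD hbarPow R V s]) : φ.compLeft ℕ f ≡ φ.compLeft ℕ f' [SMOD hbarPow R W s] :=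
  SModEq.sub_mem.2 (by rw [← map_sub]; exact compLeft_mem_hbarPow φ (SModEq.sub_mem.1 h))

theorem cauchyProd_smodEq (B : U →ₗ[R] V →ₗ[R] W) {s : ℕ} {f f' : ℕ → U} {g g' : ℕ → V}
    (hf : f ≡ f' [SMOD hbarPow R U s]) (hg : g ≡ g' [SMOD hbarPow R V s]) :
    cauchyProd B f g ≡ cauchyProd B f' g' [SMOD hbarPow R W s] := by
  have hsplit : cauchyProd B f g - cauchyProd B f' g'
      = cauchyProd B (f - f') g + cauchyProd B f' (g - g') := by
    simp only [map_sub, LinearMap.sub_apply]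
    abel
  refine SModEq.sub_mem.2 (hsplit ▸ add_mem ?_ ?_)
  · simpa using cauchyProd_mem_hbarPow B (SModEq.sub_mem.1 hf) (mem_hbarPow_zero g)
  · simpa using cauchyProd_mem_hbarPow B (mem_hbarPow_zero f') (SModEq.sub_mem.1 hg)

end Filtration

section TruncatedExp

theorem mul_pow_succ_of_mul_eq {A : Type*} [Ring A] {D T K : A} (hD : D * T = T * D + K)
    (hK : Commute T K) (m : ℕ) :
    D * T ^ (m + 1) = T ^ (m + 1) * D + (m + 1) • (K * T ^ m) := by
  induction m with
  | zero => simp [hD]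
  | succ m ih =>
    have hTK : T ^ (m + 1) * K = K * T ^ (m + 1) := (hK.pow_left (m + 1)).eq
    calc D * T ^ (m + 1 + 1) = D * T ^ (m + 1) * T := by rw [pow_succ _ (m + 1), mul_assoc]
      _ = T ^ (m + 1) * (D * T) + (m + 1) • (K * T ^ (m + 1)) := by
        rw [ih, add_mul, smul_mul_assoc, mul_assoc, mul_assoc, ← pow_succ]
      _ = _ := by
        rw [hD, mul_add, ← mul_assoc, ← pow_succ, hTK, succ_nsmul _ (m + 1)]
        abel

variable {A : Type*} [Ring A] [Algebra ℚ A]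

def expTrunc (n : ℕ) (x : A) : A := ∑ m ∈ range n, (m.factorial : ℚ)⁻¹ • x ^ m

/-- The truncation of `(exp x - 1) / x`. -/
def expDivTrunc (n : ℕ) (x : A) : A := ∑ m ∈ range n, ((m + 1).factorial : ℚ)⁻¹ • x ^ m

theorem inv_factorial_succ_smul_nsmul {M : Type*} [AddCommGroup M] [Module ℚ M] (m : ℕ) (y : M) :
    ((m + 1).factorial : ℚ)⁻¹ • (m + 1) • y = (m.factorial : ℚ)⁻¹ • y := by
  rw [← Nat.cast_smul_eq_nsmul ℚ, smul_smul, Nat.factorial_succ, Nat.cast_mul, mul_inv,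
    mul_comm, ← mul_assoc, Nat.cast_succ, mul_inv_cancel₀ (by positivity), one_mul]

theorem expTrunc_succ (n : ℕ) (x : A) :
    expTrunc (n + 1) x = expTrunc n x + (n.factorial : ℚ)⁻¹ • x ^ n :=
  sum_range_succ _ n

theorem expTrunc_succ_eq_one_add_mul (n : ℕ) (x : A) :
    expTrunc (n + 1) x = 1 + x * expDivTrunc n x := by
  rw [expTrunc, sum_range_succ', expDivTrunc, mul_sum]
  simp only [pow_zero, Nat.factorial_zero, Nat.cast_one, inv_one, one_smul, mul_smul_comm,
    ← pow_succ']
  exact add_comm _ _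

theorem Commute.expDivTrunc_right {a x : A} (h : Commute a x) (n : ℕ) :
    Commute a (expDivTrunc n x) :=
  Commute.sum_right _ _ _ fun m _ => (h.pow_right m).smul_right _

theorem mul_expTrunc_succ {D T K : A} (hD : D * T = T * D + K) (hK : Commute T K) (n : ℕ) :
    D * expTrunc (n + 1) T = expTrunc (n + 1) T * D + K * expTrunc n T := by
  simp only [expTrunc, mul_sum, sum_mul, mul_smul_comm, smul_mul_assoc]
  rw [sum_range_succ', sum_range_succ' _ n]
  simp only [mul_pow_succ_of_mul_eq hD hK, smul_add, inv_factorial_succ_smul_nsmul,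
    sum_add_distrib, pow_zero, mul_one, one_mul]
  abel

end TruncatedExp

section Conjugation

variable {M N : Type*} [AddCommGroup M] [Module ℚ M] [AddCommGroup N] [Module ℚ N]

def twistedAd (f : Module.End ℚ N) (g : Module.End ℚ M) : Module.End ℚ (M →ₗ[ℚ] N) :=
  LinearMap.llcomp ℚ M N N f - LinearMap.lcomp ℚ N g

theorem twistedAd_apply (f : Module.End ℚ N) (g : Module.End ℚ M) (A : M →ₗ[ℚ] N) :
    twistedAd f g A = f ∘ₗ A - A ∘ₗ g := rfl

theorem pow_comp_eq_sum_antidiagonal (f : Module.End ℚ N) (g : Module.End ℚ M)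
    (A : M →ₗ[ℚ] N) (m : ℕ) :
    (f ^ m) ∘ₗ A = ∑ p ∈ antidiagonal m, m.choose p.1 • ((twistedAd f g ^ p.1) A ∘ₗ (g ^ p.2)) := by
  set L : Module.End ℚ (M →ₗ[ℚ] N) := LinearMap.llcomp ℚ M N N f
  set P : Module.End ℚ (M →ₗ[ℚ] N) := LinearMap.lcomp ℚ N g
  have hL : ∀ k, (L ^ k) A = (f ^ k) ∘ₗ A := by
    intro k
    induction k with
    | zero => rfl
    | succ k ih => rw [pow_succ', Module.End.mul_apply, ih, pow_succ', Module.End.mul_eq_comp]; rfl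
  have hP : ∀ k (B : M →ₗ[ℚ] N), (P ^ k) B = B ∘ₗ (g ^ k) := by
    intro k B
    induction k with
    | zero => rfl
    | succ k ih => rw [pow_succ', Module.End.mul_apply, ih, pow_succ, Module.End.mul_eq_comp]; rfl
  have hcomm : Commute (twistedAd f g) P := by
    refine LinearMap.ext fun B => LinearMap.ext fun x => ?_
    simp [twistedAd, P]
  rw [← hL, show L = twistedAd f g + P from (sub_add_cancel L P).symm, hcomm.add_pow',
    LinearMap.sum_apply]
  refine sum_congr rfl fun p _ => ?_
  rw [LinearMap.smul_apply, (hcomm.pow_pow p.1 p.2).eq, Module.End.mul_apply, hP]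

theorem inv_factorial_mul_choose (i j : ℕ) :
    ((i + j).factorial : ℚ)⁻¹ * (i + j).choose i = (i.factorial : ℚ)⁻¹ * (j.factorial : ℚ)⁻¹ := by
  rw [Nat.cast_add_choose]
  field_simp

/-- Expanding `f^m ∘ A` binomially, the two sides differ exactly by the terms with `i + j ≥ n`. -/
theorem expTrunc_apply_smodEq (F : ℕ → Submodule ℚ N) (hF : Antitone F)
    {f : Module.End ℚ N} {g : Module.End ℚ M} {A : M →ₗ[ℚ] N} {σ : M}
    (hA : ∀ i j, (twistedAd f g ^ i) A ((g ^ j) σ) ∈ F (i + j)) (n : ℕ) :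
    expTrunc n f (A σ) ≡ expTrunc n (twistedAd f g) A (expTrunc n g σ) [SMOD F n] := by
  set term : ℕ → ℕ → N := fun i j =>
    (((i.factorial : ℚ)⁻¹ * (j.factorial : ℚ)⁻¹) • (twistedAd f g ^ i) A ((g ^ j) σ))
  have hL : expTrunc n f (A σ) = ∑ i ∈ range n, ∑ j ∈ range (n - i), term i j := by
    rw [← sum_range_diag_flip]
    simp only [expTrunc, LinearMap.sum_apply, LinearMap.smul_apply]
    refine sum_congr rfl fun m _ => ?_
    rw [← LinearMap.comp_apply, pow_comp_eq_sum_antidiagonal f g A m, LinearMap.sum_apply,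
      smul_sum, ← Nat.sum_antidiagonal_eq_sum_range_succ (fun i j => term i j)]
    refine sum_congr rfl fun p hp => ?_
    rw [HasAntidiagonal.mem_antidiagonal] at hp
    subst hp
    rw [LinearMap.smul_apply, ← Nat.cast_smul_eq_nsmul ℚ, smul_smul, inv_factorial_mul_choose]
    rfl
  have hR : expTrunc n (twistedAd f g) A (expTrunc n g σ)
      = ∑ i ∈ range n, ∑ j ∈ range n, term i j := by
    simp only [expTrunc, LinearMap.sum_apply, LinearMap.smul_apply, map_sum, map_smul, smul_sum,
      smul_smul, term]
    rw [sum_comm]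
    exact sum_congr rfl fun i _ => sum_congr rfl fun j _ => by rw [mul_comm]
  rw [hL, hR]
  refine SModEq.sum fun i hi => SModEq.sub_mem.2 ?_
  rw [← sum_range_add_sum_Ico _ (Nat.sub_le n i), sub_add_cancel_left]
  refine neg_mem (Submodule.sum_mem _ fun j hj => Submodule.smul_mem _ _ (hF ?_ (hA i j)))
  rw [mem_Ico] at hj
  rw [mem_range] at hi
  omega

theorem expTrunc_apply_of_comp_eq {M' : Type*} [AddCommGroup M'] [Module ℚ M']
    {f : Module.End ℚ M} {g : Module.End ℚ M'} {Φ : M →ₗ[ℚ] M'} (h : g ∘ₗ Φ = Φ ∘ₗ f)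
    (n : ℕ) (x : M) : expTrunc n g (Φ x) = Φ (expTrunc n f x) := by
  simp only [expTrunc, LinearMap.sum_apply, LinearMap.smul_apply, map_sum, map_smul]
  refine sum_congr rfl fun m _ => ?_
  rw [← LinearMap.comp_apply, Module.End.commute_pow_left_of_commute h, LinearMap.comp_apply]

end Conjugation

section SeriesOperators

variable {U V W : Type*} [AddCommGroup U] [Module ℚ U] [AddCommGroup V] [Module ℚ V]
  [AddCommGroup W] [Module ℚ W]

def seriesBracket (br : U →ₗ[ℚ] V →ₗ[ℚ] W) :
    (ℕ → ℕ → U) →ₗ[ℚ] (ℕ → ℕ → V) →ₗ[ℚ] (ℕ → ℕ → W) :=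
  cauchyProd (cauchyProd br)

theorem seriesBracket_apply (br : U →ₗ[ℚ] V →ₗ[ℚ] W) (ρ : ℕ → ℕ → U) (σ : ℕ → ℕ → V) (k n : ℕ) :
    seriesBracket br ρ σ k n
      = ∑ p ∈ antidiagonal k, ∑ r ∈ antidiagonal n, br (ρ p.1 r.1) (σ p.2 r.2) := by
  simp [seriesBracket, cauchyProd_apply]

/-- `x · t^j`. -/
def tMonomial (j : ℕ) (x : ℕ → W) : ℕ → ℕ → W := fun i n => if n = j then x i else 0

def tMul (j : ℕ) : Module.End ℚ (ℕ → ℕ → W) := (tShift ℚ j).compLeft ℕ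

def cMul (q : ℕ) : Module.End ℚ (ℕ → ℕ → W) := ((q : ℚ) + 1)⁻¹ • tMul (q + 1)

def derivT : Module.End ℚ (ℕ → ℕ → W) := (tDeriv ℚ).compLeft ℕ

def dMap (d : V →ₗ[ℚ] W) : (ℕ → ℕ → V) →ₗ[ℚ] (ℕ → ℕ → W) := (d.compLeft ℕ).compLeft ℕ

def adEta (br : W →ₗ[ℚ] V →ₗ[ℚ] W) (η : ℕ → V) : Module.End ℚ (ℕ → ℕ → W) :=
  (seriesBracket br).flip (tMonomial 0 η)

def cAdEta (br : W →ₗ[ℚ] V →ₗ[ℚ] W) (η : ℕ → V) (q : ℕ) : Module.End ℚ (ℕ → ℕ → W) :=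
  cMul q * adEta br η

theorem cShift_eq_cMul (q : ℕ) (ρ : ℕ → ℕ → W) : cShift q ρ = cMul q ρ := by
  ext k n
  simp [cShift, cMul, tMul, tShift_apply]

theorem seriesBracket_tMul_left (br : U →ₗ[ℚ] V →ₗ[ℚ] W) (j : ℕ) (ρ : ℕ → ℕ → U)
    (σ : ℕ → ℕ → V) : seriesBracket br (tMul j ρ) σ = tMul j (seriesBracket br ρ σ) :=
  (cauchyProd_map (tShift ℚ j) (tShift ℚ j) id
    fun _ _ => (cauchyProd_tShift_left br j _ _).symm).symm

theorem seriesBracket_tMul_right (br : U →ₗ[ℚ] V →ₗ[ℚ] W) (j : ℕ) (ρ : ℕ → ℕ → U)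
    (σ : ℕ → ℕ → V) : seriesBracket br ρ (tMul j σ) = tMul j (seriesBracket br ρ σ) :=
  (cauchyProd_map (tShift ℚ j) id (tShift ℚ j)
    fun _ _ => (cauchyProd_tShift_right br j _ _).symm).symm

theorem seriesBracket_cMul_left (br : U →ₗ[ℚ] V →ₗ[ℚ] W) (q : ℕ) (ρ : ℕ → ℕ → U)
    (σ : ℕ → ℕ → V) : seriesBracket br (cMul q ρ) σ = cMul q (seriesBracket br ρ σ) := by
  simp only [cMul, LinearMap.smul_apply, map_smul, seriesBracket_tMul_left]

theorem seriesBracket_cMul_right (br : U →ₗ[ℚ] V →ₗ[ℚ] W) (q : ℕ) (ρ : ℕ → ℕ → U)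
    (σ : ℕ → ℕ → V) : seriesBracket br ρ (cMul q σ) = cMul q (seriesBracket br ρ σ) := by
  simp only [cMul, LinearMap.smul_apply, map_smul, seriesBracket_tMul_right]

theorem tMul_commute (i j : ℕ) : Commute (tMul i : Module.End ℚ (ℕ → ℕ → W)) (tMul j) := by
  refine LinearMap.ext fun ρ => funext fun k => ?_
  simp only [Module.End.mul_apply, tMul, LinearMap.compLeft_apply, Function.comp_apply,
    tShift_tShift, add_comm]

theorem cMul_commute_tMul (q j : ℕ) : Commute (cMul q : Module.End ℚ (ℕ → ℕ → W)) (tMul j) :=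
  (tMul_commute (q + 1) j).smul_left _

theorem derivT_mul_cMul (q : ℕ) :
    (derivT : Module.End ℚ (ℕ → ℕ → W)) * cMul q = cMul q * derivT + tMul q := by
  refine LinearMap.ext fun ρ => funext fun k => ?_
  simp only [cMul, mul_smul_comm, smul_mul_assoc, LinearMap.add_apply, LinearMap.smul_apply,
    Module.End.mul_apply, derivT, tMul, LinearMap.compLeft_apply, Function.comp_apply,
    Pi.add_apply, Pi.smul_apply, tDeriv_tShift_succ, smul_add]
  rw [← Nat.cast_smul_eq_nsmul ℚ, smul_smul, Nat.cast_succ, inv_mul_cancel₀ (by positivity),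
    one_smul, add_comm]

theorem dMap_tMul (d : V →ₗ[ℚ] W) (j : ℕ) (σ : ℕ → ℕ → V) :
    dMap d (tMul j σ) = tMul j (dMap d σ) := by
  ext k n
  simp only [dMap, tMul, LinearMap.compLeft_apply, Function.comp_apply, tShift_apply]
  split_ifs <;> simp

theorem dMap_cMul (d : V →ₗ[ℚ] W) (q : ℕ) (σ : ℕ → ℕ → V) :
    dMap d (cMul q σ) = cMul q (dMap d σ) := by
  simp only [cMul, LinearMap.smul_apply, map_smul, dMap_tMul]

theorem tMonomial_eq_tMul (j : ℕ) (x : ℕ → W) : tMonomial j x = tMul j (tMonomial 0 x) := by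
  ext i n
  simp only [tMonomial, tMul, LinearMap.compLeft_apply, Function.comp_apply, tShift_apply]
  split_ifs <;> first | rfl | omega

theorem dMap_tMonomial (d : V →ₗ[ℚ] W) (j : ℕ) (x : ℕ → V) :
    dMap d (tMonomial j x) = tMonomial j (fun i => d (x i)) := by
  ext i n
  simp only [dMap, tMonomial, LinearMap.compLeft_apply, Function.comp_apply]
  split_ifs <;> simp

theorem tMonomial_mem_hbarPow_one {x : ℕ → W} (hx : x 0 = 0) (j : ℕ) :
    tMonomial j x ∈ hbarPow ℚ (ℕ → W) 1 := by
  intro i hi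
  ext n
  simp [tMonomial, Nat.lt_one_iff.1 hi, hx]

theorem cMul_mem_hbarPow (q : ℕ) {s : ℕ} {ρ : ℕ → ℕ → W} (hρ : ρ ∈ hbarPow ℚ (ℕ → W) s) :
    cMul q ρ ∈ hbarPow ℚ (ℕ → W) s :=
  Submodule.smul_mem _ _ (compLeft_mem_hbarPow _ hρ)

variable (br : W →ₗ[ℚ] V →ₗ[ℚ] W) {η : ℕ → V} (q : ℕ)

theorem adEta_commute_tMul (j : ℕ) : Commute (adEta br η) (tMul j) :=
  LinearMap.ext fun ρ => seriesBracket_tMul_left br j ρ _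

theorem adEta_commute_cMul : Commute (adEta br η) (cMul q) :=
  ((adEta_commute_tMul br (q + 1)).symm.smul_left _).symm

theorem seriesBracket_tMonomial (ρ : ℕ → ℕ → W) :
    seriesBracket br ρ (tMonomial q η) = tMul q (adEta br η ρ) := by
  rw [tMonomial_eq_tMul, seriesBracket_tMul_right]
  rfl

theorem adEta_mem_hbarPow (hη : η 0 = 0) {s : ℕ} {ρ : ℕ → ℕ → W}
    (hρ : ρ ∈ hbarPow ℚ (ℕ → W) s) : adEta br η ρ ∈ hbarPow ℚ (ℕ → W) (s + 1) :=
  cauchyProd_mem_hbarPow _ hρ (tMonomial_mem_hbarPow_one hη 0)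

theorem adEta_smodEq (hη : η 0 = 0) {s : ℕ} {ρ ρ' : ℕ → ℕ → W}
    (h : ρ ≡ ρ' [SMOD hbarPow ℚ (ℕ → W) s]) :
    adEta br η ρ ≡ adEta br η ρ' [SMOD hbarPow ℚ (ℕ → W) (s + 1)] := by
  rw [SModEq.sub_mem, ← map_sub]
  exact adEta_mem_hbarPow br hη (SModEq.sub_mem.1 h)

theorem cAdEta_pow_mem_hbarPow (hη : η 0 = 0) {s : ℕ} {ρ : ℕ → ℕ → W}
    (hρ : ρ ∈ hbarPow ℚ (ℕ → W) s) (m : ℕ) : (cAdEta br η q ^ m) ρ ∈ hbarPow ℚ (ℕ → W) (s + m) := by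
  induction m with
  | zero => simpa using hρ
  | succ m ih =>
    rw [pow_succ', Module.End.mul_apply, ← add_assoc]
    exact cMul_mem_hbarPow q (adEta_mem_hbarPow br hη ih)

theorem cAdEta_pow_mem_hbarPow_self (hη : η 0 = 0) (ρ : ℕ → ℕ → W) (m : ℕ) :
    (cAdEta br η q ^ m) ρ ∈ hbarPow ℚ (ℕ → W) m := by
  simpa using cAdEta_pow_mem_hbarPow br q hη (mem_hbarPow_zero ρ) m

theorem expTrunc_smodEq_expTrunc_succ (hη : η 0 = 0) {s : ℕ} {ρ : ℕ → ℕ → W}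
    (hρ : ρ ∈ hbarPow ℚ (ℕ → W) s) (N : ℕ) :
    expTrunc N (cAdEta br η q) ρ ≡ expTrunc (N + 1) (cAdEta br η q) ρ
      [SMOD hbarPow ℚ (ℕ → W) (s + N)] := by
  rw [SModEq.sub_mem, expTrunc_succ, LinearMap.add_apply, sub_add_cancel_left]
  exact neg_mem (Submodule.smul_mem _ _ (cAdEta_pow_mem_hbarPow br q hη hρ N))

theorem adEta1_eq_adEta (ρ : ℕ → ℕ → W) : adEta1 br η ρ = adEta br η ρ := by
  ext k n
  rw [adEta, LinearMap.flip_apply, seriesBracket, cauchyProd_apply, Finset.sum_apply]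
  exact sum_congr rfl fun p _ => congrFun (cauchyProd_single_right br (ρ p.1) (η p.2)).symm n

theorem iterate_cShift_adEta1 (m : ℕ) :
    (fun ρ => cShift q (adEta1 br η ρ))^[m] = ⇑(cAdEta br η q ^ m) := by
  rw [Module.End.coe_pow]
  congr 1
  funext ρ
  rw [cShift_eq_cMul, adEta1_eq_adEta]
  rfl

theorem derivT_commute_adEta : Commute derivT (adEta br η) := by
  refine LinearMap.ext fun ρ => ?_
  simp only [Module.End.mul_apply, ← adEta1_eq_adEta]
  ext k n
  simp [derivT, adEta1, tDeriv_apply, smul_sum]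

theorem derivT_mul_cAdEta :
    derivT * cAdEta br η q = cAdEta br η q * derivT + tMul q * adEta br η := by
  rw [cAdEta, ← mul_assoc, derivT_mul_cMul, add_mul, mul_assoc, (derivT_commute_adEta br).eq,
    mul_assoc]

theorem cAdEta_commute_tMul_mul_adEta : Commute (cAdEta br η q) (tMul q * adEta br η) :=
  ((cMul_commute_tMul q q).mul_right (adEta_commute_cMul br q).symm).mul_left
    ((adEta_commute_tMul br q).mul_right (Commute.refl _))

theorem derivT_expTrunc_succ (N : ℕ) (ρ : ℕ → ℕ → W) :
    derivT (expTrunc (N + 1) (cAdEta br η q) ρ)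
      = expTrunc (N + 1) (cAdEta br η q) (derivT ρ)
        + tMul q (adEta br η (expTrunc N (cAdEta br η q) ρ)) :=
  LinearMap.congr_fun
    (mul_expTrunc_succ (derivT_mul_cAdEta br q) (cAdEta_commute_tMul_mul_adEta br q) N) ρ

theorem derivT_cAdEta_pow_cMul {δ : ℕ → ℕ → W} (hδ : derivT δ = 0) (m : ℕ) :
    derivT ((cAdEta br η q ^ m) (cMul q δ)) = (m + 1) • tMul q ((cAdEta br η q ^ m) δ) := by
  have hcomm : Commute (cMul q) (adEta br η) := (adEta_commute_cMul br q).symm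
  have hpow : cAdEta br η q ^ m * cMul q = cMul q ^ (m + 1) * adEta br η ^ m := by
    rw [cAdEta, hcomm.mul_pow, mul_assoc, ← (hcomm.pow_right m).eq, ← mul_assoc, ← pow_succ]
  have hδm : derivT ((adEta br η ^ m) δ) = 0 := by
    rw [← Module.End.mul_apply, ((derivT_commute_adEta br).pow_right m).eq, Module.End.mul_apply,
      hδ, map_zero]
  rw [← Module.End.mul_apply _ (cMul q), hpow, ← Module.End.mul_apply, ← mul_assoc,
    mul_pow_succ_of_mul_eq (derivT_mul_cMul q) (cMul_commute_tMul q q) m]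
  simp only [add_mul, LinearMap.add_apply, Module.End.mul_apply, hδm, map_zero, zero_add,
    smul_mul_assoc, LinearMap.smul_apply]
  rw [← Module.End.mul_apply (cMul q ^ m), ← hcomm.mul_pow, cAdEta]

theorem derivT_expDivTrunc_cMul {δ : ℕ → ℕ → W} (hδ : derivT δ = 0) (N : ℕ) :
    derivT (expDivTrunc N (cAdEta br η q) (cMul q δ)) = tMul q (expTrunc N (cAdEta br η q) δ) := by
  simp only [expDivTrunc, expTrunc, LinearMap.sum_apply, LinearMap.smul_apply, map_sum, map_smul,
    derivT_cAdEta_pow_cMul br q hδ, inv_factorial_succ_smul_nsmul]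

theorem add_adEta_expDivTrunc_cMul (N : ℕ) (δ : ℕ → ℕ → W) :
    δ + adEta br η (expDivTrunc N (cAdEta br η q) (cMul q δ))
      = expTrunc (N + 1) (cAdEta br η q) δ := by
  have hcomm : Commute (cMul q) (cAdEta br η q) :=
    (Commute.refl _).mul_right (adEta_commute_cMul br q).symm
  have hΦ : expDivTrunc N (cAdEta br η q) (cMul q δ) = cMul q (expDivTrunc N (cAdEta br η q) δ) :=
    LinearMap.congr_fun (hcomm.expDivTrunc_right N).eq.symm δ
  rw [hΦ, ← Module.End.mul_apply (adEta br η), (adEta_commute_cMul br q).eq,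
    expTrunc_succ_eq_one_add_mul]
  rfl

end SeriesOperators

section DGLA

variable (br10 : g1 →ₗ[ℚ] g0 →ₗ[ℚ] g1) (br00 : g0 →ₗ[ℚ] g0 →ₗ[ℚ] g0) (d0 : g0 →ₗ[ℚ] g1)
  {η : ℕ → g0} (q : ℕ)

theorem adEta_seriesBracket
    (hJac10 : ∀ (a : g1) (x y : g0),
      br10 (br10 a x) y - br10 (br10 a y) x = br10 a (br00 x y))
    (ρ : ℕ → ℕ → g1) (σ : ℕ → ℕ → g0) :
    adEta br10 η (seriesBracket br10 ρ σ)
      = seriesBracket br10 (adEta br10 η ρ) σ + seriesBracket br10 ρ (adEta br00 η σ) :=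
  cauchyProd_jacobi (cauchyProd_jacobi fun a x y => sub_eq_iff_eq_add'.1 (hJac10 a x y)) ρ σ
    (tMonomial 0 η)

theorem adEta_dMap
    (hcocycle : ∀ x y : g0, d0 (br00 x y) = br10 (d0 x) y - br10 (d0 y) x)
    (σ : ℕ → ℕ → g0) :
    adEta br10 η (dMap d0 σ)
      = dMap d0 (adEta br00 η σ) + seriesBracket br10 (tMonomial 0 fun i => d0 (η i)) σ := by
  rw [← dMap_tMonomial]
  exact cauchyProd_cocycle (B := cauchyProd br10) (B₀ := cauchyProd br00) (D := d0.compLeft ℕ)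
    (φ := d0.compLeft ℕ) (cauchyProd_cocycle fun x y => by rw [hcocycle]; abel) σ (tMonomial 0 η)

theorem cAdEta_seriesBracket
    (hJac10 : ∀ (a : g1) (x y : g0),
      br10 (br10 a x) y - br10 (br10 a y) x = br10 a (br00 x y))
    (ρ : ℕ → ℕ → g1) (σ : ℕ → ℕ → g0) :
    cAdEta br10 η q (seriesBracket br10 ρ σ)
      = seriesBracket br10 (cAdEta br10 η q ρ) σ + seriesBracket br10 ρ (cAdEta br00 η q σ) := by
  simp only [cAdEta, Module.End.mul_apply, adEta_seriesBracket br10 br00 hJac10, map_add,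
    seriesBracket_cMul_left, seriesBracket_cMul_right]

theorem twistedAd_cAdEta_comp_seriesBracket
    (hJac10 : ∀ (a : g1) (x y : g0),
      br10 (br10 a x) y - br10 (br10 a y) x = br10 a (br00 x y)) :
    twistedAd (cAdEta br10 η q) (cAdEta br00 η q) ∘ₗ seriesBracket br10
      = seriesBracket br10 ∘ₗ cAdEta br10 η q := by
  refine LinearMap.ext fun ρ => LinearMap.ext fun σ => ?_
  simp [twistedAd_apply, cAdEta_seriesBracket br10 br00 q hJac10]

theorem twistedAd_cAdEta_pow_seriesBracket
    (hJac10 : ∀ (a : g1) (x y : g0),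
      br10 (br10 a x) y - br10 (br10 a y) x = br10 a (br00 x y)) (i : ℕ) (ρ : ℕ → ℕ → g1) :
    (twistedAd (cAdEta br10 η q) (cAdEta br00 η q) ^ i) (seriesBracket br10 ρ)
      = seriesBracket br10 ((cAdEta br10 η q ^ i) ρ) :=
  LinearMap.congr_fun (Module.End.commute_pow_left_of_commute
    (twistedAd_cAdEta_comp_seriesBracket br10 br00 q hJac10) i) ρ

theorem twistedAd_cAdEta_dMap
    (hcocycle : ∀ x y : g0, d0 (br00 x y) = br10 (d0 x) y - br10 (d0 y) x) :
    twistedAd (cAdEta br10 η q) (cAdEta br00 η q) (dMap d0)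
      = seriesBracket br10 (cMul q (tMonomial 0 fun i => d0 (η i))) := by
  refine LinearMap.ext fun σ => ?_
  simp [twistedAd_apply, cAdEta, adEta_dMap br10 br00 d0 hcocycle, dMap_cMul,
    seriesBracket_cMul_left]

theorem expTrunc_seriesBracket_smodEq (hη : η 0 = 0)
    (hJac10 : ∀ (a : g1) (x y : g0),
      br10 (br10 a x) y - br10 (br10 a y) x = br10 a (br00 x y))
    (n : ℕ) (α : ℕ → ℕ → g1) (ξ : ℕ → ℕ → g0) :
    expTrunc n (cAdEta br10 η q) (seriesBracket br10 α ξ)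
      ≡ seriesBracket br10 (expTrunc n (cAdEta br10 η q) α) (expTrunc n (cAdEta br00 η q) ξ)
        [SMOD hbarPow ℚ (ℕ → g1) n] := by
  rw [← expTrunc_apply_of_comp_eq (twistedAd_cAdEta_comp_seriesBracket br10 br00 q hJac10)]
  refine expTrunc_apply_smodEq _ hbarPow_antitone (fun i j => ?_) n
  rw [twistedAd_cAdEta_pow_seriesBracket br10 br00 q hJac10]
  exact cauchyProd_mem_hbarPow _ (cAdEta_pow_mem_hbarPow_self br10 q hη α i)
    (cAdEta_pow_mem_hbarPow_self br00 q hη ξ j)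

theorem expTrunc_dMap_smodEq (hη : η 0 = 0)
    (hJac10 : ∀ (a : g1) (x y : g0),
      br10 (br10 a x) y - br10 (br10 a y) x = br10 a (br00 x y))
    (hcocycle : ∀ x y : g0, d0 (br00 x y) = br10 (d0 x) y - br10 (d0 y) x)
    (N : ℕ) (ξ : ℕ → ℕ → g0) :
    expTrunc (N + 1) (cAdEta br10 η q) (dMap d0 ξ)
      ≡ dMap d0 (expTrunc (N + 1) (cAdEta br00 η q) ξ)
        + seriesBracket br10
            (expDivTrunc N (cAdEta br10 η q) (cMul q (tMonomial 0 fun i => d0 (η i))))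
            (expTrunc (N + 1) (cAdEta br00 η q) ξ)
        [SMOD hbarPow ℚ (ℕ → g1) (N + 1)] := by
  set δ := twistedAd (cAdEta br10 η q) (cAdEta br00 η q)
  set dη := cMul q (tMonomial 0 fun i => d0 (η i))
  have hpow : ∀ i, (δ ^ (i + 1)) (dMap d0) = seriesBracket br10 ((cAdEta br10 η q ^ i) dη) := by
    intro i
    rw [pow_succ, Module.End.mul_apply, twistedAd_cAdEta_dMap br10 br00 d0 q hcocycle,
      twistedAd_cAdEta_pow_seriesBracket br10 br00 q hJac10]
  have hexp : expTrunc (N + 1) δ (dMap d0)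
      = dMap d0 + seriesBracket br10 (expDivTrunc N (cAdEta br10 η q) dη) := by
    simp only [expTrunc_succ_eq_one_add_mul, LinearMap.add_apply, Module.End.one_apply,
      Module.End.mul_apply, expDivTrunc, LinearMap.sum_apply, LinearMap.smul_apply, map_sum,
      map_smul, ← Module.End.mul_apply δ, ← pow_succ', hpow]
  have hA : ∀ i j, (δ ^ i) (dMap d0) ((cAdEta br00 η q ^ j) ξ) ∈ hbarPow ℚ (ℕ → g1) (i + j) := by
    rintro (_ | i) j
    · simpa [dMap] using
        compLeft_mem_hbarPow (d0.compLeft ℕ) (cAdEta_pow_mem_hbarPow_self br00 q hη ξ j)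
    · rw [hpow]
      have hdη : dη ∈ hbarPow ℚ (ℕ → g1) 1 :=
        cMul_mem_hbarPow q (tMonomial_mem_hbarPow_one (by simp [hη]) 0)
      exact hbarPow_antitone (le_of_eq (by omega)) (cauchyProd_mem_hbarPow _
        (cAdEta_pow_mem_hbarPow br10 q hη hdη i) (cAdEta_pow_mem_hbarPow_self br00 q hη ξ j))
  have := expTrunc_apply_smodEq _ hbarPow_antitone hA (N + 1)
  rwa [hexp, LinearMap.add_apply] at this

variable (η)

def lamTrunc (N : ℕ) (α : ℕ → ℕ → g1) : ℕ → ℕ → g1 :=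
  expTrunc (N + 1) (cAdEta br10 η q) α
    + expDivTrunc N (cAdEta br10 η q) (cMul q (tMonomial 0 fun i => d0 (η i)))

def xiTrunc (N : ℕ) (ξ : ℕ → ℕ → g0) : ℕ → ℕ → g0 :=
  tMonomial q η + expTrunc (N + 1) (cAdEta br00 η q) ξ

variable {η}

theorem derivT_lamTrunc_smodEq (hη : η 0 = 0)
    (hJac10 : ∀ (a : g1) (x y : g0),
      br10 (br10 a x) y - br10 (br10 a y) x = br10 a (br00 x y))
    (hcocycle : ∀ x y : g0, d0 (br00 x y) = br10 (d0 x) y - br10 (d0 y) x)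
    (N : ℕ) {α : ℕ → ℕ → g1} {ξ : ℕ → ℕ → g0}
    (hODE : derivT α = dMap d0 ξ + seriesBracket br10 α ξ) :
    derivT (lamTrunc br10 d0 η q N α)
      ≡ dMap d0 (xiTrunc br00 η q N ξ)
        + seriesBracket br10 (lamTrunc br10 d0 η q N α) (xiTrunc br00 η q N ξ)
        [SMOD hbarPow ℚ (ℕ → g1) (N + 1)] := by
  set E₁ := expTrunc (N + 1) (cAdEta br10 η q)
  set E₀ := expTrunc (N + 1) (cAdEta br00 η q)
  set dη := tMonomial 0 fun i => d0 (η i)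
  set ψ := expDivTrunc N (cAdEta br10 η q) (cMul q dη)
  have hdη : derivT dη = 0 := by
    ext k n
    simp [dη, derivT, tDeriv_apply, tMonomial]
  have hα : tMul q (adEta br10 η (expTrunc N (cAdEta br10 η q) α)) ≡ tMul q (adEta br10 η (E₁ α))
      [SMOD hbarPow ℚ (ℕ → g1) (N + 1)] := by
    have h := expTrunc_smodEq_expTrunc_succ br10 q hη (mem_hbarPow_zero α) N
    rw [zero_add] at h
    exact compLeft_smodEq _ (adEta_smodEq br10 hη h)
  have hdη' : tMul q (expTrunc N (cAdEta br10 η q) dη) ≡ tMul q (E₁ dη)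
      [SMOD hbarPow ℚ (ℕ → g1) (N + 1)] := by
    have h := expTrunc_smodEq_expTrunc_succ br10 q hη
      (tMonomial_mem_hbarPow_one (x := fun i => d0 (η i)) (by simp [hη]) 0) N
    rw [add_comm] at h
    exact compLeft_smodEq _ h
  calc derivT (lamTrunc br10 d0 η q N α)
      = E₁ (dMap d0 ξ) + E₁ (seriesBracket br10 α ξ)
          + tMul q (adEta br10 η (expTrunc N (cAdEta br10 η q) α))
          + tMul q (expTrunc N (cAdEta br10 η q) dη) := by
        rw [lamTrunc, map_add, derivT_expTrunc_succ, hODE, map_add,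
          derivT_expDivTrunc_cMul br10 q hdη]
    _ ≡ (dMap d0 (E₀ ξ) + seriesBracket br10 ψ (E₀ ξ)) + seriesBracket br10 (E₁ α) (E₀ ξ)
          + tMul q (adEta br10 η (E₁ α)) + tMul q (E₁ dη) [SMOD hbarPow ℚ (ℕ → g1) (N + 1)] :=
        (((expTrunc_dMap_smodEq br10 br00 d0 q hη hJac10 hcocycle N ξ).add
          (expTrunc_seriesBracket_smodEq br10 br00 q hη hJac10 (N + 1) α ξ)).add hα).add hdη'
    _ = dMap d0 (xiTrunc br00 η q N ξ)
          + seriesBracket br10 (lamTrunc br10 d0 η q N α) (xiTrunc br00 η q N ξ) := by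
        rw [← add_adEta_expDivTrunc_cMul br10 q N dη, xiTrunc, lamTrunc]
        simp only [map_add, LinearMap.add_apply, seriesBracket_tMonomial, dMap_tMonomial]
        rw [tMonomial_eq_tMul]
        abel

theorem lamEl_smodEq_lamTrunc (hη : η 0 = 0) (N : ℕ) (α : ℕ → ℕ → g1) :
    lamEl br10 d0 q η α ≡ lamTrunc br10 d0 η q N α [SMOD hbarPow ℚ (ℕ → g1) (N + 1)] := by
  set T := cAdEta br10 η q
  set dη := tMonomial 0 fun i => d0 (η i)
  have hcomm : Commute (cMul q) T := (Commute.refl _).mul_right (adEta_commute_cMul br10 q).symm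
  have hsplit : lamEl br10 d0 q η α
      = (fun p => ∑ m ∈ range (p + 1), (((m.factorial : ℚ)⁻¹ • (T ^ m) α) p))
        + fun p => ∑ m ∈ range (p + 1), ((((m + 1).factorial : ℚ)⁻¹ • (T ^ m) (cMul q dη)) p) := by
    ext p n
    simp only [lamEl, iterate_cShift_adEta1]
    simp only [cShift_eq_cMul, Pi.add_apply, Finset.sum_apply, Pi.smul_apply]
    congr 1
    refine sum_congr rfl fun m _ => ?_
    rw [← Module.End.mul_apply _ (T ^ m), (hcomm.pow_right m).eq]
    rfl
  have hlam : lamTrunc br10 d0 η q N α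
      = ∑ m ∈ range (N + 1), ((m.factorial : ℚ)⁻¹ • (T ^ m) α)
        + ∑ m ∈ range N, (((m + 1).factorial : ℚ)⁻¹ • (T ^ m) (cMul q dη)) := by
    simp only [lamTrunc, expTrunc, expDivTrunc, LinearMap.sum_apply, LinearMap.smul_apply, T, dη]
  have hdη : cMul q dη ∈ hbarPow ℚ (ℕ → g1) 1 :=
    cMul_mem_hbarPow q (tMonomial_mem_hbarPow_one (by simp [hη]) 0)
  rw [hsplit, hlam]
  refine SModEq.add (diagonal_sum_smodEq_sum (s := 0) (fun m => ?_) (by omega))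
    (diagonal_sum_smodEq_sum (s := 1) (fun m => ?_) (by omega))
  · exact Submodule.smul_mem _ _ (cAdEta_pow_mem_hbarPow_self br10 q hη α m)
  · exact Submodule.smul_mem _ _ (by simpa [add_comm] using cAdEta_pow_mem_hbarPow br10 q hη hdη m)

theorem xiTilde_smodEq_xiTrunc (hη : η 0 = 0) (N : ℕ) (ξ : ℕ → ℕ → g0) :
    xiTilde br00 q η ξ ≡ xiTrunc br00 η q N ξ [SMOD hbarPow ℚ (ℕ → g0) (N + 1)] := by
  have hsplit : xiTilde br00 q η ξ = tMonomial q η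
      + fun p => ∑ m ∈ range (p + 1), (((m.factorial : ℚ)⁻¹ • (cAdEta br00 η q ^ m) ξ) p) := by
    ext p n
    have hiter : (fun ρ => cShift q (adEta0 br00 η ρ)) = fun ρ => cShift q (adEta1 br00 η ρ) :=
      rfl
    simp only [xiTilde, hiter, iterate_cShift_adEta1]
    simp only [Pi.add_apply, Finset.sum_apply, Pi.smul_apply]
    rfl
  have hxi : xiTrunc br00 η q N ξ
      = tMonomial q η + ∑ m ∈ range (N + 1), ((m.factorial : ℚ)⁻¹ • (cAdEta br00 η q ^ m) ξ) := by
    simp only [xiTrunc, expTrunc, LinearMap.sum_apply, LinearMap.smul_apply]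
  rw [hsplit, hxi]
  exact SModEq.add SModEq.rfl (diagonal_sum_smodEq_sum (s := 0)
    (fun m => Submodule.smul_mem _ _ (cAdEta_pow_mem_hbarPow_self br00 q hη ξ m)) (by omega))

end DGLA

theorem statement17_general
    (d0 : g0 →ₗ[ℚ] g1)
    (br00 : g0 →ₗ[ℚ] g0 →ₗ[ℚ] g0)
    (br10 : g1 →ₗ[ℚ] g0 →ₗ[ℚ] g1)
    (hJac10 : ∀ (a : g1) (x y : g0),
      br10 (br10 a x) y - br10 (br10 a y) x = br10 a (br00 x y))
    (hcocycle : ∀ x y : g0, d0 (br00 x y) = br10 (d0 x) y - br10 (d0 y) x)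
    (ξ : ℕ → ℕ → g0)
    (α : ℕ → ℕ → g1)
    (hODE : ∀ k n, (n + 1 : ℕ) • α k (n + 1)
      = d0 (ξ k n)
        + ∑ p ∈ Finset.HasAntidiagonal.antidiagonal k, ∑ r ∈ Finset.HasAntidiagonal.antidiagonal n,
            br10 (α p.1 r.1) (ξ p.2 r.2))
    (η : ℕ → g0) (hη0 : η 0 = 0)
    (q : ℕ) :
    ∀ k n,
      (n + 1 : ℕ) • lamEl br10 d0 q η α k (n + 1)
        = d0 (xiTilde br00 q η ξ k n)
          + ∑ p ∈ Finset.HasAntidiagonal.antidiagonal k, ∑ r ∈ Finset.HasAntidiagonal.antidiagonal n,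
              br10 (lamEl br10 d0 q η α p.1 r.1)
                (xiTilde br00 q η ξ p.2 r.2) := by
  intro k n
  have hODE' : derivT α = dMap d0 ξ + seriesBracket br10 α ξ := by
    ext k' n'
    rw [Pi.add_apply, Pi.add_apply, seriesBracket_apply]
    exact hODE k' n'
  have hlam := lamEl_smodEq_lamTrunc br10 d0 q hη0 k α
  have hxi := xiTilde_smodEq_xiTrunc br00 q hη0 k ξ
  have key : derivT (lamEl br10 d0 q η α)
      ≡ dMap d0 (xiTilde br00 q η ξ) + seriesBracket br10 (lamEl br10 d0 q η α) (xiTilde br00 q η ξ)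
        [SMOD hbarPow ℚ (ℕ → g1) (k + 1)] :=
    calc derivT (lamEl br10 d0 q η α)
        ≡ derivT (lamTrunc br10 d0 η q k α) [SMOD hbarPow ℚ (ℕ → g1) (k + 1)] :=
          compLeft_smodEq _ hlam
      _ ≡ dMap d0 (xiTrunc br00 η q k ξ)
            + seriesBracket br10 (lamTrunc br10 d0 η q k α) (xiTrunc br00 η q k ξ)
            [SMOD hbarPow ℚ (ℕ → g1) (k + 1)] :=
          derivT_lamTrunc_smodEq br10 br00 d0 q hη0 hJac10 hcocycle k hODE'
      _ ≡ _ [SMOD hbarPow ℚ (ℕ → g1) (k + 1)] :=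
          ((compLeft_smodEq _ hxi).add (cauchyProd_smodEq _ hlam hxi)).symm
  have := congrFun (apply_eq_of_smodEq key) n
  rwa [Pi.add_apply, Pi.add_apply, seriesBracket_apply] at this

/-- Lemma B.8 of the paper: let `α(t)` be the solution of
`dα/dt = dξ + [α(t), ξ]`, `α(0) = α₀`, for a Maurer–Cartan element
`α₀ ∈ ℏ·L¹[[ℏ]]` and `ξ ∈ ℏ·(L⁰[t])[[ℏ]]`.  Then for every `η ∈ ℏ·L⁰[[ℏ]]` and
every `q ≥ 0`, the element
`λ(t) = exp((t^{q+1}/(q+1))[·,η]) α(t) + ((exp((t^{q+1}/(q+1))[·,η]) − 1)/[·,η]) dη`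
satisfies the differential equation `dλ(t)/dt = d ξ̃ + [λ(t), ξ̃]` with
`ξ̃ = t^q η + exp((t^{q+1}/(q+1))[·,η]) ξ` (coefficientwise in `ℏ` and `t`). -/
theorem statement17
    (d0 : g0 →ₗ[ℚ] g1) (d1 : g1 →ₗ[ℚ] g2)
    (br00 : g0 →ₗ[ℚ] g0 →ₗ[ℚ] g0)
    (br10 : g1 →ₗ[ℚ] g0 →ₗ[ℚ] g1)
    (br11 : g1 →ₗ[ℚ] g1 →ₗ[ℚ] g2)
    (hskew00 : ∀ x y : g0, br00 x y = - br00 y x)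
    (hJac00 : ∀ x y z : g0,
      br00 (br00 x y) z = br00 x (br00 y z) - br00 y (br00 x z))
    (hJac10 : ∀ (a : g1) (x y : g0),
      br10 (br10 a x) y - br10 (br10 a y) x = br10 a (br00 x y))
    (hcocycle : ∀ x y : g0, d0 (br00 x y) = br10 (d0 x) y - br10 (d0 y) x)
    (α₀ : ℕ → g1) (hα₀0 : α₀ 0 = 0)
    (hMC0 : ∀ k, d1 (α₀ k)
      + (2 : ℚ)⁻¹ • ∑ p ∈ Finset.HasAntidiagonal.antidiagonal k, br11 (α₀ p.1) (α₀ p.2) = 0)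
    (ξ : ℕ → ℕ → g0) (hξ0 : ∀ n, ξ 0 n = 0) (hξpoly : IsPolyInT ξ)
    (α : ℕ → ℕ → g1) (hαpoly : IsPolyInT α)
    (hinit : ∀ k, α k 0 = α₀ k)
    (hODE : ∀ k n, (n + 1 : ℕ) • α k (n + 1)
      = d0 (ξ k n)
        + ∑ p ∈ Finset.HasAntidiagonal.antidiagonal k, ∑ r ∈ Finset.HasAntidiagonal.antidiagonal n,
            br10 (α p.1 r.1) (ξ p.2 r.2))
    (η : ℕ → g0) (hη0 : η 0 = 0)
    (q : ℕ) :
    ∀ k n,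
      (n + 1 : ℕ) • lamEl br10 d0 q η α k (n + 1)
        = d0 (xiTilde br00 q η ξ k n)
          + ∑ p ∈ Finset.HasAntidiagonal.antidiagonal k, ∑ r ∈ Finset.HasAntidiagonal.antidiagonal n,
              br10 (lamEl br10 d0 q η α p.1 r.1)
                (xiTilde br00 q η ξ p.2 r.2) :=
  statement17_general d0 br00 br10 hJac10 hcocycle ξ α hODE η hη0 q

end
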